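/- arXiv:2311.08316 — 2 statements merged into one kernel-verified Lean document; each statement's English description precedes it below -/
import Mathlib

section
/- Let U ∈ ℝ^{m×k} have orthonormal columns and S ∈ ℝ^{d×m}. Suppose 1−δ ≤ σ_min(SU) and σ_max(SU) ≤ 1+δ for some δ ∈ [0,1). Then for every matrix M with range(M) ⊆ range(U) and every j, (1−δ) σ_j(M) ≤ σ_j(SM) ≤ (1+δ) σ_j(M). -/
open Matrix BigOperators

noncomputable def sval {m n : ℕ} (A : Matrix (Fin m) (Fin n) ℝ) (j : Fin n) : ℝ :=
  Real.sqrt ((Matrix.isHermitian_conjTranspose_mul_self A).eigenvalues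
    (Tuple.sort (Matrix.isHermitian_conjTranspose_mul_self A).eigenvalues j.rev))

noncomputable def specNorm {m n : ℕ} (A : Matrix (Fin m) (Fin n) ℝ) : ℝ :=
  sSup (Set.range (sval A))

noncomputable def sMin {m n : ℕ} (A : Matrix (Fin m) (Fin n) ℝ) : ℝ :=
  sInf (Set.range (sval A))

noncomputable def frob {m n : ℕ} (A : Matrix (Fin m) (Fin n) ℝ) : ℝ :=
  Real.sqrt (∑ i, ∑ j, (A i j)^2)

noncomputable def enorm {m : ℕ} (x : Fin m → ℝ) : ℝ := Real.sqrt (∑ i, (x i)^2)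

def UpperTri {k n : ℕ} (R : Matrix (Fin k) (Fin n) ℝ) : Prop :=
  ∀ (i : Fin k) (j : Fin n), (j : ℕ) < (i : ℕ) → R i j = 0

def lead {k n : ℕ} (R : Matrix (Fin k) (Fin n) ℝ) (ℓ : ℕ) (h1 : ℓ ≤ k) (h2 : ℓ ≤ n) :
    Matrix (Fin ℓ) (Fin ℓ) ℝ := fun i j => R (Fin.castLE h1 i) (Fin.castLE h2 j)

def topRight {k n : ℕ} (R : Matrix (Fin k) (Fin n) ℝ) (ℓ : ℕ) (h1 : ℓ ≤ k) :
    Matrix (Fin ℓ) (Fin (n - ℓ)) ℝ :=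
  fun i j => R (Fin.castLE h1 i) ⟨ℓ + j.1, by have := j.isLt; omega⟩

def trail {k n : ℕ} (R : Matrix (Fin k) (Fin n) ℝ) (ℓ : ℕ) :
    Matrix (Fin (k - ℓ)) (Fin (n - ℓ)) ℝ :=
  fun i j => R ⟨ℓ + i.1, by have := i.isLt; omega⟩ ⟨ℓ + j.1, by have := j.isLt; omega⟩

/-! If `M = U Z`, then `‖M x‖ = ‖Z x‖` and `S M x = (S U) (Z x)`, so the bounds on the singular
values of `S U` give `(1 - δ) ‖M x‖ ≤ ‖S M x‖ ≤ (1 + δ) ‖M x‖` for every `x`. Such a comparison of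
the quadratic forms `x ↦ ‖A x‖²` passes to each ordered eigenvalue of the Gram matrices by the
Courant–Fischer dimension count: the eigenvectors of one form with eigenvalues `≥ λ_k` and those of
the other with eigenvalues `≤ λ'_k` span subspaces of total dimension `n + 1`, which therefore share
a nonzero vector. -/

open scoped RealInnerProductSpace

theorem Submodule.inf_ne_bot_of_finrank_lt_add {K V : Type*} [DivisionRing K] [AddCommGroup V]
    [Module K V] [FiniteDimensional K V] (W W' : Submodule K V)
    (h : Module.finrank K V < Module.finrank K W + Module.finrank K W') : W ⊓ W' ≠ ⊥ := by
  intro hbot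
  have hsum := Submodule.finrank_sup_add_finrank_inf_eq W W'
  rw [hbot, finrank_bot] at hsum
  have := Submodule.finrank_le (W ⊔ W')
  omega

namespace OrthonormalBasis

variable {ι E : Type*} [Fintype ι] [NormedAddCommGroup E] [InnerProductSpace ℝ E]
  (v : OrthonormalBasis ι ℝ E)

theorem finrank_span_image (s : Finset ι) :
    Module.finrank ℝ (Submodule.span ℝ (v '' s)) = s.card := by
  have hli : LinearIndependent ℝ (fun i : (s : Set ι) => v i) :=
    v.orthonormal.linearIndependent.comp _ Subtype.val_injective
  rw [Set.image_eq_range, finrank_span_eq_card hli]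
  simp

theorem inner_eq_zero_of_mem_span_image {s : Set ι} {i : ι} (hi : i ∉ s) {x : E}
    (hx : x ∈ Submodule.span ℝ (v '' s)) : ⟪v i, x⟫ = 0 := by
  have hle : Submodule.span ℝ (v '' s) ≤ (ℝ ∙ v i)ᗮ := by
    refine Submodule.span_le.2 ?_
    rintro _ ⟨j, hj, rfl⟩
    exact Submodule.mem_orthogonal_singleton_iff_inner_right.2
      (v.orthonormal.2 fun hij => hi (hij ▸ hj))
  exact Submodule.mem_orthogonal_singleton_iff_inner_right.1 (hle hx)

variable {T : E →ₗ[ℝ] E} {μ : ι → ℝ}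

theorem inner_map_self_eq_sum (hv : ∀ i, T (v i) = μ i • v i) (x : E) :
    ⟪T x, x⟫ = ∑ i, μ i * ⟪v i, x⟫ ^ 2 := by
  have hTx : T x = ∑ i, (μ i * ⟪v i, x⟫) • v i := by
    conv_lhs => rw [← v.sum_repr' x]
    simp [map_sum, hv, smul_smul, mul_comm]
  rw [hTx, sum_inner]
  simp [inner_smul_left, sq, mul_assoc]

theorem mul_norm_sq_le_inner_map_self (hv : ∀ i, T (v i) = μ i • v i) {s : Set ι} {c : ℝ}
    (hc : ∀ i ∈ s, c ≤ μ i) {x : E} (hx : x ∈ Submodule.span ℝ (v '' s)) :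
    c * ‖x‖ ^ 2 ≤ ⟪T x, x⟫ := by
  rw [v.inner_map_self_eq_sum hv, ← v.sum_sq_inner_right, Finset.mul_sum]
  refine Finset.sum_le_sum fun i _ => ?_
  by_cases hi : i ∈ s
  · exact mul_le_mul_of_nonneg_right (hc i hi) (sq_nonneg _)
  · simp [v.inner_eq_zero_of_mem_span_image hi hx]

theorem inner_map_self_le_mul_norm_sq (hv : ∀ i, T (v i) = μ i • v i) {s : Set ι} {c : ℝ}
    (hc : ∀ i ∈ s, μ i ≤ c) {x : E} (hx : x ∈ Submodule.span ℝ (v '' s)) :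
    ⟪T x, x⟫ ≤ c * ‖x‖ ^ 2 := by
  rw [v.inner_map_self_eq_sum hv, ← v.sum_sq_inner_right, Finset.mul_sum]
  refine Finset.sum_le_sum fun i _ => ?_
  by_cases hi : i ∈ s
  · exact mul_le_mul_of_nonneg_right (hc i hi) (sq_nonneg _)
  · simp [v.inner_eq_zero_of_mem_span_image hi hx]

end OrthonormalBasis

theorem OrthonormalBasis.mul_le_mul_of_inner_map_self_le {E : Type*} [NormedAddCommGroup E]
    [InnerProductSpace ℝ E] {n : ℕ} {S T : E →ₗ[ℝ] E}
    (v w : OrthonormalBasis (Fin n) ℝ E) {μ ν : Fin n → ℝ} (hμ : Monotone μ) (hν : Monotone ν)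
    (hv : ∀ i, S (v i) = μ i • v i) (hw : ∀ i, T (w i) = ν i • w i) {a b : ℝ}
    (ha : 0 ≤ a) (hb : 0 ≤ b) (h : ∀ x, a * ⟪S x, x⟫ ≤ b * ⟪T x, x⟫) (k : Fin n) :
    a * μ k ≤ b * ν k := by
  have : FiniteDimensional ℝ E := v.toBasis.finiteDimensional_of_finite
  have hdim : Module.finrank ℝ E < Module.finrank ℝ (Submodule.span ℝ (v '' ↑(Finset.Ici k)))
      + Module.finrank ℝ (Submodule.span ℝ (w '' ↑(Finset.Iic k))) := by
    rw [v.finrank_span_image, w.finrank_span_image, Fin.card_Ici, Fin.card_Iic,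
      Module.finrank_eq_card_basis v.toBasis, Fintype.card_fin]
    omega
  obtain ⟨x, ⟨hxv, hxw⟩, hx0⟩ :=
    Submodule.exists_mem_ne_zero_of_ne_bot (Submodule.inf_ne_bot_of_finrank_lt_add _ _ hdim)
  have hS : μ k * ‖x‖ ^ 2 ≤ ⟪S x, x⟫ :=
    v.mul_norm_sq_le_inner_map_self hv (fun i hi => hμ (Finset.mem_Ici.1 hi)) hxv
  have hT : ⟪T x, x⟫ ≤ ν k * ‖x‖ ^ 2 :=
    w.inner_map_self_le_mul_norm_sq hw (fun i hi => hν (Finset.mem_Iic.1 hi)) hxw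
  have hx : 0 < ‖x‖ ^ 2 := by positivity
  have : a * μ k * ‖x‖ ^ 2 ≤ b * ν k * ‖x‖ ^ 2 := calc
    a * μ k * ‖x‖ ^ 2 = a * (μ k * ‖x‖ ^ 2) := mul_assoc _ _ _
    _ ≤ a * ⟪S x, x⟫ := mul_le_mul_of_nonneg_left hS ha
    _ ≤ b * ⟪T x, x⟫ := h x
    _ ≤ b * (ν k * ‖x‖ ^ 2) := mul_le_mul_of_nonneg_left hT hb
    _ = b * ν k * ‖x‖ ^ 2 := (mul_assoc _ _ _).symm
  exact le_of_mul_le_mul_right this hx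

namespace Matrix.IsHermitian

variable {n : ℕ} {A : Matrix (Fin n) (Fin n) ℝ} (hA : A.IsHermitian)

-- `hA.eigenvalues` come in no specified order; `sval` reads them through `Tuple.sort`.
noncomputable def sortedEigenvalues : Fin n → ℝ :=
  hA.eigenvalues ∘ Tuple.sort hA.eigenvalues

noncomputable def sortedEigenvectorBasis : OrthonormalBasis (Fin n) ℝ (EuclideanSpace ℝ (Fin n)) :=
  hA.eigenvectorBasis.reindex (Tuple.sort hA.eigenvalues).symm

theorem monotone_sortedEigenvalues : Monotone hA.sortedEigenvalues :=
  Tuple.monotone_sort _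

theorem toEuclideanLin_sortedEigenvectorBasis (i : Fin n) :
    toEuclideanLin A (hA.sortedEigenvectorBasis i) =
      hA.sortedEigenvalues i • hA.sortedEigenvectorBasis i := by
  rw [toLpLin_apply, sortedEigenvectorBasis, OrthonormalBasis.reindex_apply, Equiv.symm_symm,
    mulVec_eigenvectorBasis]
  rfl

end Matrix.IsHermitian

section SingularValues

variable {m m' n : ℕ}

theorem sval_eq_sqrt_sortedEigenvalues (A : Matrix (Fin m) (Fin n) ℝ) (j : Fin n) :
    sval A j = √((isHermitian_conjTranspose_mul_self A).sortedEigenvalues j.rev) := rfl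

theorem inner_toEuclideanLin_conjTranspose_mul_self (A : Matrix (Fin m) (Fin n) ℝ)
    (x : EuclideanSpace ℝ (Fin n)) :
    ⟪toEuclideanLin (Aᴴ * A) x, x⟫ = ‖toEuclideanLin A x‖ ^ 2 := by
  rw [toLpLin_mul_same, toEuclideanLin_conjTranspose_eq_adjoint, LinearMap.comp_apply,
    LinearMap.adjoint_inner_left, real_inner_self_eq_norm_sq]

theorem mul_sval_le_mul_sval {A : Matrix (Fin m) (Fin n) ℝ} {B : Matrix (Fin m') (Fin n) ℝ}
    {a b : ℝ} (ha : 0 ≤ a) (hb : 0 ≤ b)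
    (h : ∀ x, a * ‖toEuclideanLin A x‖ ≤ b * ‖toEuclideanLin B x‖) (j : Fin n) :
    a * sval A j ≤ b * sval B j := by
  set hA := isHermitian_conjTranspose_mul_self A
  set hB := isHermitian_conjTranspose_mul_self B
  have hsq (x : EuclideanSpace ℝ (Fin n)) :
      a ^ 2 * ⟪toEuclideanLin (Aᴴ * A) x, x⟫ ≤ b ^ 2 * ⟪toEuclideanLin (Bᴴ * B) x, x⟫ := by
    simp only [inner_toEuclideanLin_conjTranspose_mul_self, ← mul_pow]
    exact pow_le_pow_left₀ (by positivity) (h x) 2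
  have heig := hA.sortedEigenvectorBasis.mul_le_mul_of_inner_map_self_le hB.sortedEigenvectorBasis
    hA.monotone_sortedEigenvalues hB.monotone_sortedEigenvalues
    hA.toEuclideanLin_sortedEigenvectorBasis hB.toEuclideanLin_sortedEigenvectorBasis
    (sq_nonneg a) (sq_nonneg b) hsq j.rev
  rw [sval_eq_sqrt_sortedEigenvalues, sval_eq_sqrt_sortedEigenvalues,
    ← Real.sqrt_sq ha, ← Real.sqrt_sq hb, ← Real.sqrt_mul (sq_nonneg a),
    ← Real.sqrt_mul (sq_nonneg b)]
  exact Real.sqrt_le_sqrt heig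

theorem mul_norm_le_norm_toEuclideanLin {A : Matrix (Fin m) (Fin n) ℝ} {c : ℝ} (hc : 0 ≤ c)
    (h : ∀ j, c ≤ sval A j) (x : EuclideanSpace ℝ (Fin n)) :
    c * ‖x‖ ≤ ‖toEuclideanLin A x‖ := by
  set hA := isHermitian_conjTranspose_mul_self A
  have heig (i : Fin n) : c ^ 2 ≤ hA.sortedEigenvalues i := by
    have hi := h i.rev
    rw [sval_eq_sqrt_sortedEigenvalues, Fin.rev_rev] at hi
    exact (Real.le_sqrt hc (eigenvalues_conjTranspose_mul_self_nonneg A _)).1 hi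
  have := hA.sortedEigenvectorBasis.mul_norm_sq_le_inner_map_self
    hA.toEuclideanLin_sortedEigenvectorBasis (s := Set.univ) (x := x) (fun i _ => heig i)
    (by simp [← OrthonormalBasis.coe_toBasis, Module.Basis.span_eq])
  rw [inner_toEuclideanLin_conjTranspose_mul_self, ← mul_pow] at this
  exact (pow_le_pow_iff_left₀ (by positivity) (norm_nonneg _) two_ne_zero).1 this

theorem norm_toEuclideanLin_le_mul_norm {A : Matrix (Fin m) (Fin n) ℝ} {c : ℝ} (hc : 0 ≤ c)
    (h : ∀ j, sval A j ≤ c) (x : EuclideanSpace ℝ (Fin n)) :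
    ‖toEuclideanLin A x‖ ≤ c * ‖x‖ := by
  set hA := isHermitian_conjTranspose_mul_self A
  have heig (i : Fin n) : hA.sortedEigenvalues i ≤ c ^ 2 := by
    have hi := h i.rev
    rw [sval_eq_sqrt_sortedEigenvalues, Fin.rev_rev] at hi
    exact (Real.sqrt_le_left hc).1 hi
  have := hA.sortedEigenvectorBasis.inner_map_self_le_mul_norm_sq
    hA.toEuclideanLin_sortedEigenvectorBasis (s := Set.univ) (x := x) (fun i _ => heig i)
    (by simp [← OrthonormalBasis.coe_toBasis, Module.Basis.span_eq])
  rw [inner_toEuclideanLin_conjTranspose_mul_self, ← mul_pow] at this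
  exact (pow_le_pow_iff_left₀ (norm_nonneg _) (by positivity) two_ne_zero).1 this

theorem norm_toEuclideanLin_of_transpose_mul_self_eq_one {U : Matrix (Fin m) (Fin n) ℝ}
    (hU : Uᵀ * U = 1) (x : EuclideanSpace ℝ (Fin n)) : ‖toEuclideanLin U x‖ = ‖x‖ := by
  have := inner_toEuclideanLin_conjTranspose_mul_self U x
  rw [conjTranspose_eq_transpose_of_trivial, hU, toLpLin_one, LinearMap.id_apply,
    real_inner_self_eq_norm_sq] at this
  exact ((pow_left_inj₀ (norm_nonneg _) (norm_nonneg _) two_ne_zero).1 this).symm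

end SingularValues

theorem embedding_preserves_singular_values {m d n p : ℕ}
    (δ : ℝ) (hδ0 : 0 ≤ δ) (hδ1 : δ < 1)
    (U : Matrix (Fin m) (Fin n) ℝ) (hU : Uᵀ * U = 1)
    (S : Matrix (Fin d) (Fin m) ℝ)
    (hemb : ∀ j : Fin n, 1 - δ ≤ sval (S * U) j ∧ sval (S * U) j ≤ 1 + δ)
    (M : Matrix (Fin m) (Fin p) ℝ)
    (hrange : LinearMap.range M.mulVecLin ≤ LinearMap.range U.mulVecLin) :
    ∀ j : Fin p, (1 - δ) * sval M j ≤ sval (S * M) j ∧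
      sval (S * M) j ≤ (1 + δ) * sval M j := by
  have hlo : 0 ≤ 1 - δ := by linarith
  have hhi : 0 ≤ 1 + δ := by linarith
  have hfactor (x : EuclideanSpace ℝ (Fin p)) : ∃ z, ‖toEuclideanLin M x‖ = ‖z‖ ∧
      toEuclideanLin (S * M) x = toEuclideanLin (S * U) z := by
    obtain ⟨z, hz⟩ := hrange ⟨x.ofLp, rfl⟩
    have hMx : toEuclideanLin M x = toEuclideanLin U (WithLp.toLp 2 z) := by
      simpa [toLpLin_apply] using hz.symm
    refine ⟨WithLp.toLp 2 z, ?_, ?_⟩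
    · rw [hMx, norm_toEuclideanLin_of_transpose_mul_self_eq_one hU]
    · rw [toLpLin_mul_same, toLpLin_mul_same, LinearMap.comp_apply, LinearMap.comp_apply, hMx]
  intro j
  constructor
  · refine (mul_sval_le_mul_sval hlo zero_le_one (fun x => ?_) j).trans_eq (one_mul _)
    obtain ⟨z, hnorm, hSM⟩ := hfactor x
    rw [hnorm, hSM, one_mul]
    exact mul_norm_le_norm_toEuclideanLin hlo (fun i => (hemb i).1) z
  · refine (one_mul _).symm.trans_le (mul_sval_le_mul_sval zero_le_one hhi (fun x => ?_) j)
    obtain ⟨z, hnorm, hSM⟩ := hfactor x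
    rw [hnorm, hSM, one_mul]
    exact norm_toEuclideanLin_le_mul_norm hhi (fun i => (hemb i).2) z
end

section
/- With the same setup as the sketched RRQR proposition (M = QR, SM = Q̂R̂, S a δ-embedding for range(M), R = R̃R̂ with all singular values of R̃ in [(1+δ)⁻¹,(1−δ)⁻¹]), let A_ℓ, B_ℓ (resp. Â_ℓ, B̂_ℓ, Ĉ_ℓ) denote the corresponding blocks of R (resp. R̂). Then ‖A_ℓ⁻¹ B_ℓ‖₂ ≤ ‖Â_ℓ⁻¹ B̂_ℓ‖₂ + ((1+δ)/(1−δ)) · σ_min(Â_ℓ)⁻¹ · ‖Ĉ_ℓ‖₂. -/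
open Matrix BigOperators

/-!
Writing Ã, B̃ for the blocks of R̃, the identities A_ℓ = Ã_ℓ Â_ℓ and B_ℓ = Ã_ℓ B̂_ℓ + B̃_ℓ Ĉ_ℓ give
A_ℓ⁻¹ B_ℓ = Â_ℓ⁻¹ B̂_ℓ + Â_ℓ⁻¹ (Ã_ℓ⁻¹ B̃_ℓ) Ĉ_ℓ. As R̃ is upper triangular, Ã_ℓ⁻¹ is the leading
block of R̃⁻¹; blocks do not increase the spectral norm, so ‖Ã_ℓ⁻¹‖ ≤ ‖R̃⁻¹‖ ≤ σ_min(R̃)⁻¹ ≤ 1 + δ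
and ‖B̃_ℓ‖ ≤ ‖R̃‖ ≤ (1 - δ)⁻¹, while ‖Â_ℓ⁻¹‖ ≤ σ_min(Â_ℓ)⁻¹.

The spectral norm defined through singular values is the ℓ² operator norm: expanding x in an
orthonormal eigenbasis (vⱼ) of AᵀA with eigenvalues λⱼ gives ‖A x‖² = ∑ⱼ λⱼ ⟪vⱼ, x⟫², which lies
between σ_min(A)² ‖x‖² and σ_max(A)² ‖x‖², with equality at the extreme eigenvectors.
-/

open scoped Matrix.Norms.L2Operator

namespace Matrix

variable {l m n o : Type*} [Fintype l] [Fintype m] [Fintype n] [Fintype o]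

lemma IsHermitian.inner_mulVec_self_eq_sum [DecidableEq n] {H : Matrix n n ℝ}
    (hH : H.IsHermitian) (x : EuclideanSpace ℝ n) :
    inner ℝ x (WithLp.toLp 2 (H *ᵥ x)) =
      ∑ j, hH.eigenvalues j * inner ℝ (hH.eigenvectorBasis j) x ^ 2 := by
  rw [← hH.eigenvectorBasis.sum_inner_mul_inner]
  refine Finset.sum_congr rfl fun j _ => ?_
  have hsymm := isSymmetric_toEuclideanLin_iff.mpr hH (hH.eigenvectorBasis j) x
  simp only [toLpLin_apply, hH.mulVec_eigenvectorBasis, WithLp.toLp_smul, WithLp.toLp_ofLp,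
    real_inner_smul_left] at hsymm
  rw [← hsymm, real_inner_comm x]
  ring

lemma sq_norm_mulVec_eq_sum [DecidableEq n] (A : Matrix m n ℝ) (x : EuclideanSpace ℝ n) :
    ‖WithLp.toLp 2 (A *ᵥ x)‖ ^ 2 = ∑ j, (isHermitian_conjTranspose_mul_self A).eigenvalues j *
      inner ℝ ((isHermitian_conjTranspose_mul_self A).eigenvectorBasis j) x ^ 2 := by
  rw [← (isHermitian_conjTranspose_mul_self A).inner_mulVec_self_eq_sum,
    ← real_inner_self_eq_norm_sq, EuclideanSpace.inner_eq_star_dotProduct,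
    EuclideanSpace.inner_eq_star_dotProduct]
  simp [← mulVec_mulVec, dotProduct_mulVec, vecMul_transpose, dotProduct_comm]

variable {𝕜 : Type*} [RCLike 𝕜] [DecidableEq m]

lemma l2_opNorm_one_submatrix_le {f : l → m} (hf : Function.Injective f) :
    ‖(1 : Matrix m m 𝕜).submatrix f id‖ ≤ 1 := by
  rw [l2_opNorm_def]
  refine ContinuousLinearMap.opNorm_le_bound _ zero_le_one fun x => ?_
  have hx : (1 : Matrix m m 𝕜).submatrix f id *ᵥ x.ofLp = x.ofLp ∘ f := by
    ext i; simp [mulVec, dotProduct, one_apply]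
  simp only [LinearEquiv.trans_apply, LinearMap.coe_toContinuousLinearMap', toLpLin_apply, hx,
    one_mul, EuclideanSpace.norm_eq]
  refine Real.sqrt_le_sqrt ?_
  calc ∑ i, ‖x.ofLp (f i)‖ ^ 2 = ∑ j ∈ Finset.univ.map ⟨f, hf⟩, ‖x.ofLp j‖ ^ 2 :=
        (Finset.sum_map Finset.univ ⟨f, hf⟩ fun j => ‖x.ofLp j‖ ^ 2).symm
    _ ≤ ∑ j, ‖x.ofLp j‖ ^ 2 := Finset.sum_le_univ_sum_of_nonneg fun _ => by positivity

lemma l2_opNorm_submatrix_le [DecidableEq n] [DecidableEq o] (A : Matrix m n 𝕜) {f : l → m}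
    {g : o → n} (hf : Function.Injective f) (hg : Function.Injective g) :
    ‖A.submatrix f g‖ ≤ ‖A‖ := by
  have hsel : A.submatrix f g =
      (1 : Matrix m m 𝕜).submatrix f id * A * ((1 : Matrix n n 𝕜).submatrix g id)ᴴ := by
    ext i j
    simp [mul_apply, one_apply]
  calc ‖A.submatrix f g‖
      ≤ ‖(1 : Matrix m m 𝕜).submatrix f id‖ * ‖A‖ * ‖((1 : Matrix n n 𝕜).submatrix g id)ᴴ‖ := by
        rw [hsel]
        exact (l2_opNorm_mul _ _).trans (by gcongr; exact l2_opNorm_mul _ _)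
    _ ≤ 1 * ‖A‖ * 1 := by
        rw [l2_opNorm_conjTranspose]
        gcongr
        exacts [l2_opNorm_one_submatrix_le hf, l2_opNorm_one_submatrix_le hg]
    _ = ‖A‖ := by ring

end Matrix

section SingularValues

variable {m n : ℕ} (A : Matrix (Fin m) (Fin n) ℝ)

lemma sval_nonneg (j : Fin n) : 0 ≤ sval A j :=
  Real.sqrt_nonneg _

lemma specNorm_nonneg : 0 ≤ specNorm A :=
  Real.sSup_nonneg <| Set.forall_mem_range.2 (sval_nonneg A)

lemma sMin_nonneg : 0 ≤ sMin A :=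
  Real.sInf_nonneg <| Set.forall_mem_range.2 (sval_nonneg A)

lemma range_sval :
    Set.range (sval A) =
      Real.sqrt '' Set.range (isHermitian_conjTranspose_mul_self A).eigenvalues := by
  set ev := (isHermitian_conjTranspose_mul_self A).eigenvalues
  change Set.range ((Real.sqrt ∘ ev) ∘ (Tuple.sort ev ∘ Fin.rev)) = _
  rw [((Tuple.sort ev).surjective.comp Fin.rev_surjective).range_comp, Set.range_comp]

lemma eigenvalue_le_specNorm_sq (j : Fin n) :
    (isHermitian_conjTranspose_mul_self A).eigenvalues j ≤ specNorm A ^ 2 :=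
  (Real.sqrt_le_left (specNorm_nonneg A)).1 <|
    le_csSup (Set.finite_range _).bddAbove (range_sval A ▸ Set.mem_image_of_mem _ ⟨j, rfl⟩)

lemma sMin_sq_le_eigenvalue (j : Fin n) :
    sMin A ^ 2 ≤ (isHermitian_conjTranspose_mul_self A).eigenvalues j :=
  (Real.le_sqrt (sMin_nonneg A) (eigenvalues_conjTranspose_mul_self_nonneg A j)).1 <|
    csInf_le (Set.finite_range _).bddBelow (range_sval A ▸ Set.mem_image_of_mem _ ⟨j, rfl⟩)

lemma norm_mulVec_le_specNorm_mul (x : EuclideanSpace ℝ (Fin n)) :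
    ‖WithLp.toLp 2 (A *ᵥ x)‖ ≤ specNorm A * ‖x‖ := by
  refine (pow_le_pow_iff_left₀ (norm_nonneg _)
    (mul_nonneg (specNorm_nonneg A) (norm_nonneg x)) two_ne_zero).1 ?_
  rw [mul_pow, sq_norm_mulVec_eq_sum, ← OrthonormalBasis.sum_sq_norm_inner_right
    (isHermitian_conjTranspose_mul_self A).eigenvectorBasis x, Finset.mul_sum]
  simp only [Real.norm_eq_abs, sq_abs]
  gcongr with j
  exact eigenvalue_le_specNorm_sq A j

lemma sMin_mul_norm_le_norm_mulVec (x : EuclideanSpace ℝ (Fin n)) :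
    sMin A * ‖x‖ ≤ ‖WithLp.toLp 2 (A *ᵥ x)‖ := by
  refine (pow_le_pow_iff_left₀ (mul_nonneg (sMin_nonneg A) (norm_nonneg x))
    (norm_nonneg _) two_ne_zero).1 ?_
  rw [mul_pow, sq_norm_mulVec_eq_sum, ← OrthonormalBasis.sum_sq_norm_inner_right
    (isHermitian_conjTranspose_mul_self A).eigenvectorBasis x, Finset.mul_sum]
  simp only [Real.norm_eq_abs, sq_abs]
  gcongr with j
  exact sMin_sq_le_eigenvalue A j

lemma sq_norm_mulVec_eigenvectorBasis (j : Fin n) :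
    ‖WithLp.toLp 2 (A *ᵥ (isHermitian_conjTranspose_mul_self A).eigenvectorBasis j)‖ ^ 2 =
      (isHermitian_conjTranspose_mul_self A).eigenvalues j := by
  simp [sq_norm_mulVec_eq_sum, OrthonormalBasis.inner_eq_ite]

lemma specNorm_eq_l2_opNorm : specNorm A = ‖A‖ := by
  refine le_antisymm (Real.sSup_le ?_ (norm_nonneg A)) ?_
  · rintro _ ⟨i, rfl⟩
    refine (Real.sqrt_le_left (norm_nonneg A)).2 ?_
    rw [← sq_norm_mulVec_eigenvectorBasis]
    refine pow_le_pow_left₀ (norm_nonneg _) ?_ 2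
    simpa using l2_opNorm_mulVec A ((isHermitian_conjTranspose_mul_self A).eigenvectorBasis _)
  · exact ContinuousLinearMap.opNorm_le_bound _ (specNorm_nonneg A) (norm_mulVec_le_specNorm_mul A)

end SingularValues

section Square

variable {p : ℕ} (A : Matrix (Fin p) (Fin p) ℝ)

lemma isUnit_det_of_sMin_pos (h : 0 < sMin A) : IsUnit A.det := by
  rw [← isUnit_iff_isUnit_det, ← mulVec_injective_iff_isUnit]
  intro x y hxy
  have hle := sMin_mul_norm_le_norm_mulVec A (WithLp.toLp 2 (x - y))
  rw [WithLp.ofLp_toLp, mulVec_sub, hxy, sub_self, WithLp.toLp_zero, norm_zero] at hle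
  have hxy0 := le_of_mul_le_mul_left (hle.trans (mul_zero _).ge) h
  rwa [norm_le_zero_iff, WithLp.toLp_eq_zero, sub_eq_zero] at hxy0

lemma l2_opNorm_inv_le_inv_sMin (h : 0 < sMin A) : ‖A⁻¹‖ ≤ (sMin A)⁻¹ := by
  refine ContinuousLinearMap.opNorm_le_bound _ (inv_nonneg.2 h.le) fun y => ?_
  have := sMin_mul_norm_le_norm_mulVec A (WithLp.toLp 2 (A⁻¹ *ᵥ y))
  rwa [WithLp.ofLp_toLp, mulVec_mulVec, mul_nonsing_inv _ (isUnit_det_of_sMin_pos A h),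
    one_mulVec, ← le_div_iff₀' h, ← inv_mul_eq_div] at this

lemma sMin_pos_of_isUnit_det (hp : 0 < p) (hA : IsUnit A.det) : 0 < sMin A := by
  have : Nonempty (Fin p) := ⟨⟨0, hp⟩⟩
  obtain ⟨i, hi⟩ := (Set.range_nonempty (sval A)).csInf_mem (Set.finite_range _)
  rw [sMin, ← hi]
  refine Real.sqrt_pos.2 (PosDef.eigenvalues_pos (PosDef.conjTranspose_mul_self A ?_) _)
  exact mulVec_injective_iff_isUnit.2 ((isUnit_iff_isUnit_det A).2 hA)

end Square

lemma Fin.sum_univ_split {M : Type*} [AddCommMonoid M] {k ℓ : ℕ} (h : ℓ ≤ k) (f : Fin k → M) :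
    ∑ i, f i = ∑ i : Fin ℓ, f (Fin.castLE h i) + ∑ i : Fin (k - ℓ), f ⟨ℓ + i, by omega⟩ := by
  rw [← (finCongr (Nat.add_sub_cancel' h)).sum_comp, Fin.sum_univ_add]
  rfl

section Blocks

variable {k n ℓ : ℕ}

lemma lead_mul_of_upperTri (h1 : ℓ ≤ k) (h2 : ℓ ≤ n) (X : Matrix (Fin k) (Fin k) ℝ)
    {Y : Matrix (Fin k) (Fin n) ℝ} (hY : UpperTri Y) :
    lead (X * Y) ℓ h1 h2 = lead X ℓ h1 h1 * lead Y ℓ h1 h2 := by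
  ext i j
  simp only [lead, mul_apply]
  rw [Fin.sum_univ_split h1, add_eq_left]
  exact Finset.sum_eq_zero fun t _ => by rw [hY _ _ (by simp; omega), mul_zero]

lemma topRight_mul (h1 : ℓ ≤ k) (X : Matrix (Fin k) (Fin k) ℝ) (Y : Matrix (Fin k) (Fin n) ℝ) :
    topRight (X * Y) ℓ h1 = lead X ℓ h1 h1 * topRight Y ℓ h1 + topRight X ℓ h1 * trail Y ℓ := by
  ext i j
  simp only [topRight, lead, trail, Matrix.add_apply, mul_apply]
  exact Fin.sum_univ_split h1 _

lemma lead_one (h1 : ℓ ≤ k) : lead (1 : Matrix (Fin k) (Fin k) ℝ) ℓ h1 h1 = 1 := by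
  ext i j
  simp [lead, one_apply, Fin.castLE_inj]

lemma lead_inv_mul_lead (h1 : ℓ ≤ k) {X : Matrix (Fin k) (Fin k) ℝ} (hX : UpperTri X)
    (hdet : IsUnit X.det) : lead X⁻¹ ℓ h1 h1 * lead X ℓ h1 h1 = 1 := by
  rw [← lead_mul_of_upperTri h1 h1 _ hX, nonsing_inv_mul X hdet, lead_one]

lemma inv_lead_mul_topRight_mul (h1 : ℓ ≤ k) (h2 : ℓ ≤ n) {X : Matrix (Fin k) (Fin k) ℝ}
    {L : Matrix (Fin ℓ) (Fin ℓ) ℝ} {Y : Matrix (Fin k) (Fin n) ℝ} (hY : UpperTri Y)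
    (hL : L * lead X ℓ h1 h1 = 1) :
    (lead (X * Y) ℓ h1 h2)⁻¹ * topRight (X * Y) ℓ h1 =
      (lead Y ℓ h1 h2)⁻¹ * topRight Y ℓ h1 +
        (lead Y ℓ h1 h2)⁻¹ * (L * topRight X ℓ h1) * trail Y ℓ := by
  rw [lead_mul_of_upperTri h1 h2 X hY, topRight_mul, Matrix.mul_inv_rev, inv_eq_left_inv hL,
    Matrix.mul_assoc, Matrix.mul_add, ← Matrix.mul_assoc L, hL, Matrix.one_mul]
  simp only [Matrix.mul_assoc, Matrix.mul_add]

lemma l2_opNorm_lead_le (R : Matrix (Fin k) (Fin n) ℝ) (h1 : ℓ ≤ k) (h2 : ℓ ≤ n) :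
    ‖lead R ℓ h1 h2‖ ≤ ‖R‖ :=
  Matrix.l2_opNorm_submatrix_le R (Fin.castLE_injective h1) (Fin.castLE_injective h2)

lemma l2_opNorm_topRight_le (R : Matrix (Fin k) (Fin n) ℝ) (h1 : ℓ ≤ k) :
    ‖topRight R ℓ h1‖ ≤ ‖R‖ :=
  Matrix.l2_opNorm_submatrix_le R (Fin.castLE_injective h1) fun a b hab => by ext; simpa using hab

end Blocks

theorem srrqr_offdiag_bound_general {k n ℓ : ℕ} (hℓ : 0 < ℓ) (hℓk : ℓ < k) (hkn : k ≤ n)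
    (δ : ℝ) (hδ0 : 0 ≤ δ)
    (Rt : Matrix (Fin k) (Fin k) ℝ) (Rh : Matrix (Fin k) (Fin n) ℝ)
    (hRt : UpperTri Rt) (hRh : UpperTri Rh)
    (hsv : ∀ j : Fin k, (1 + δ)⁻¹ ≤ sval Rt j ∧ sval Rt j ≤ (1 - δ)⁻¹)
    (hAh : IsUnit (lead Rh ℓ hℓk.le (hℓk.le.trans hkn)).det) :
    specNorm ((lead (Rt * Rh) ℓ hℓk.le (hℓk.le.trans hkn))⁻¹ * topRight (Rt * Rh) ℓ hℓk.le)
      ≤ specNorm ((lead Rh ℓ hℓk.le (hℓk.le.trans hkn))⁻¹ * topRight Rh ℓ hℓk.le)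
        + ((1 + δ) / (1 - δ)) * (sMin (lead Rh ℓ hℓk.le (hℓk.le.trans hkn)))⁻¹
          * specNorm (trail Rh ℓ) := by
  have : Nonempty (Fin k) := ⟨⟨0, hℓ.trans hℓk⟩⟩
  have hδ : 0 < 1 + δ := by linarith
  have hRt_sMin : (1 + δ)⁻¹ ≤ sMin Rt :=
    le_csInf (Set.range_nonempty _) (Set.forall_mem_range.2 fun j => (hsv j).1)
  have hRt_pos : 0 < sMin Rt := (inv_pos.2 hδ).trans_le hRt_sMin
  have hRt_inv : ‖Rt⁻¹‖ ≤ 1 + δ :=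
    (l2_opNorm_inv_le_inv_sMin Rt hRt_pos).trans (inv_le_of_inv_le₀ hδ hRt_sMin)
  have hRt_norm : ‖Rt‖ ≤ (1 - δ)⁻¹ := specNorm_eq_l2_opNorm Rt ▸
    csSup_le (Set.range_nonempty _) (Set.forall_mem_range.2 fun j => (hsv j).2)
  have hAh_inv := l2_opNorm_inv_le_inv_sMin _ (sMin_pos_of_isUnit_det _ hℓ hAh)
  rw [inv_lead_mul_topRight_mul _ _ hRh
    (lead_inv_mul_lead hℓk.le hRt (isUnit_det_of_sMin_pos Rt hRt_pos))]
  simp only [specNorm_eq_l2_opNorm]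
  set Ah := lead Rh ℓ hℓk.le (hℓk.le.trans hkn)
  set L := lead Rt⁻¹ ℓ hℓk.le hℓk.le
  set Bt := topRight Rt ℓ hℓk.le
  set Ch := trail Rh ℓ
  calc ‖Ah⁻¹ * topRight Rh ℓ hℓk.le + Ah⁻¹ * (L * Bt) * Ch‖
      ≤ ‖Ah⁻¹ * topRight Rh ℓ hℓk.le‖ + ‖Ah⁻¹‖ * (‖L‖ * ‖Bt‖) * ‖Ch‖ := by
        refine norm_add_le_of_le le_rfl ((l2_opNorm_mul _ _).trans ?_)
        gcongr
        exact (l2_opNorm_mul _ _).trans (by gcongr; exact l2_opNorm_mul _ _)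
    _ ≤ ‖Ah⁻¹ * topRight Rh ℓ hℓk.le‖ + (sMin Ah)⁻¹ * ((1 + δ) * (1 - δ)⁻¹) * ‖Ch‖ := by
        gcongr
        · exact inv_nonneg.2 (sMin_nonneg Ah)
        · exact (l2_opNorm_lead_le Rt⁻¹ _ _).trans hRt_inv
        · exact (l2_opNorm_topRight_le Rt _).trans hRt_norm
    _ = _ := by ring

theorem srrqr_offdiag_bound {k n ℓ : ℕ} (hℓ : 0 < ℓ) (hℓk : ℓ < k) (hkn : k ≤ n)
    (δ : ℝ) (hδ0 : 0 ≤ δ) (hδ1 : δ < 1)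
    (Rt : Matrix (Fin k) (Fin k) ℝ) (Rh : Matrix (Fin k) (Fin n) ℝ)
    (hRt : UpperTri Rt) (hRh : UpperTri Rh)
    (hsv : ∀ j : Fin k, (1 + δ)⁻¹ ≤ sval Rt j ∧ sval Rt j ≤ (1 - δ)⁻¹)
    (hAh : IsUnit (lead Rh ℓ hℓk.le (hℓk.le.trans hkn)).det) :
    specNorm ((lead (Rt * Rh) ℓ hℓk.le (hℓk.le.trans hkn))⁻¹ * topRight (Rt * Rh) ℓ hℓk.le)
      ≤ specNorm ((lead Rh ℓ hℓk.le (hℓk.le.trans hkn))⁻¹ * topRight Rh ℓ hℓk.le)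
        + ((1 + δ) / (1 - δ)) * (sMin (lead Rh ℓ hℓk.le (hℓk.le.trans hkn)))⁻¹
          * specNorm (trail Rh ℓ) :=
  srrqr_offdiag_bound_general hℓ hℓk hkn δ hδ0 Rt Rh hRt hRh hsv hAh
end
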